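/- arXiv:2510.20744 — 10 statements merged into one kernel-verified Lean document; each statement's English description precedes it below -/
import Mathlib

section
/- Let A1 and A2 be m×n 0/1 matrices. If A1 contains no submatrix matching the 1×2 pattern (0 1) and A2 contains no submatrix matching the 2×1 pattern (1 over 0), then the Hadamard product A1 ⊙ A2 contains no 2×2 submatrix matching the pattern with entries [[1, *],[0, 1]] (where * is arbitrary). -/
theorem stmt_1 (m n : ℕ) (A1 A2 : Fin m → Fin n → Bool)
    (h1 : ¬ ∃ (i : Fin m) (j j' : Fin n), j < j' ∧ A1 i j = false ∧ A1 i j' = true)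
    (h2 : ¬ ∃ (i i' : Fin m) (j : Fin n), i < i' ∧ A2 i j = true ∧ A2 i' j = false) :
    ¬ ∃ (i i' : Fin m) (j j' : Fin n), i < i' ∧ j < j' ∧
      (A1 i j && A2 i j) = true ∧ (A1 i' j && A2 i' j) = false ∧
      (A1 i' j' && A2 i' j') = true := by
  rintro ⟨i, i', j, j', hii, hjj, hij, hBad, hij'⟩
  simp only [Bool.and_eq_true] at hij hij'
  have hA2 : A2 i' j = true := by
    by_contra h
    exact h2 ⟨i, i', j, hii, hij.2, by simpa using h⟩
  have hA1 : A1 i' j = false := by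
    cases hA1 : A1 i' j with
    | false => rfl
    | true => rw [hA1, hA2] at hBad; simp at hBad
  exact h1 ⟨i', j, j', hjj, hA1, hij'.1⟩
end

section
/- Let A be a 0/1 matrix that contains no 2×2 submatrix matching [[1,0],[0,1]] and no 2×2 submatrix matching [[0,1],[1,0]] (i.e., the matrix avoids an 'induced matching of size two' in any order). If A' is a 0/1 matrix of the same size with A' containing no submatrix matching [[1,*],[0,1]], then the Hadamard product A' ⊙ A contains no 3×3 submatrix matching the pattern Γ = [[*,1,*],[1,0,1],[0,1,*]]. -/
/-- M contains the pattern Γ = [[*,1,*],[1,0,1],[0,1,*]]. -/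
def ContainsGamma {m n : ℕ} (M : Fin m → Fin n → Bool) : Prop :=
  ∃ (i1 i2 i3 : Fin m) (j1 j2 j3 : Fin n),
    i1 < i2 ∧ i2 < i3 ∧ j1 < j2 ∧ j2 < j3 ∧
    M i1 j2 = true ∧ M i2 j1 = true ∧ M i2 j2 = false ∧ M i2 j3 = true ∧
    M i3 j1 = false ∧ M i3 j2 = true

theorem stmt_2 (m n : ℕ) (A A' : Fin m → Fin n → Bool)
    (hA1 : ¬ ∃ (i i' : Fin m) (j j' : Fin n), i < i' ∧ j < j' ∧
      A i j = true ∧ A i j' = false ∧ A i' j = false ∧ A i' j' = true)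
    (hA2 : ¬ ∃ (i i' : Fin m) (j j' : Fin n), i < i' ∧ j < j' ∧
      A i j = false ∧ A i j' = true ∧ A i' j = true ∧ A i' j' = false)
    (hA' : ¬ ∃ (i i' : Fin m) (j j' : Fin n), i < i' ∧ j < j' ∧
      A' i j = true ∧ A' i' j = false ∧ A' i' j' = true) :
    ¬ ContainsGamma (fun i j => A' i j && A i j) := by
  rintro ⟨i1, i2, i3, j1, j2, j3, h12, h23, g12, g23, e1, e2, e3, e4, e5, e6⟩
  simp only [Bool.and_eq_true, Bool.and_eq_false_iff] at e1 e2 e3 e4 e5 e6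
  -- A' i2 j2 must be true
  have hA'22 : A' i2 j2 = true := by
    by_contra h
    exact hA' ⟨i1, i2, j2, j3, h12, g23, e1.1, Bool.eq_false_iff.mpr h ▸ rfl, e4.1⟩
  have hA22 : A i2 j2 = false := by
    rcases e3 with h | h
    · rw [hA'22] at h; exact absurd h (by simp)
    · exact h
  have hA'31 : A' i3 j1 = true := by
    by_contra h
    exact hA' ⟨i2, i3, j1, j2, h23, g12, e2.1, Bool.eq_false_iff.mpr h ▸ rfl, e6.1⟩
  have hA31 : A i3 j1 = false := by
    rcases e5 with h | h
    · rw [hA'31] at h; exact absurd h (by simp)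
    · exact h
  exact hA1 ⟨i2, i3, j1, j2, h23, g12, e2.2, hA22, hA31, e6.2⟩
end

section
/- Let A be a 0/1 matrix that contains no 2×2 submatrix matching [[1,0],[0,1]] and no 2×2 submatrix matching [[0,1],[1,0]]. If A' is a 0/1 matrix of the same size containing no submatrix matching [[1,*],[0,1]], then the Hadamard product A' ⊙ A contains no 3×3 submatrix matching the pattern Δ = [[1,*,*],[0,1,*],[1,0,1]]. -/
/-- M contains the pattern Δ = [[1,*,*],[0,1,*],[1,0,1]]. -/
def ContainsDelta {m n : ℕ} (M : Fin m → Fin n → Bool) : Prop :=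
  ∃ (i1 i2 i3 : Fin m) (j1 j2 j3 : Fin n),
    i1 < i2 ∧ i2 < i3 ∧ j1 < j2 ∧ j2 < j3 ∧
    M i1 j1 = true ∧ M i2 j1 = false ∧ M i2 j2 = true ∧
    M i3 j1 = true ∧ M i3 j2 = false ∧ M i3 j3 = true

theorem stmt_3 (m n : ℕ) (A A' : Fin m → Fin n → Bool)
    (hA1 : ¬ ∃ (i i' : Fin m) (j j' : Fin n), i < i' ∧ j < j' ∧
      A i j = true ∧ A i j' = false ∧ A i' j = false ∧ A i' j' = true)
    (hA2 : ¬ ∃ (i i' : Fin m) (j j' : Fin n), i < i' ∧ j < j' ∧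
      A i j = false ∧ A i j' = true ∧ A i' j = true ∧ A i' j' = false)
    (hA' : ¬ ∃ (i i' : Fin m) (j j' : Fin n), i < i' ∧ j < j' ∧
      A' i j = true ∧ A' i' j = false ∧ A' i' j' = true) :
    ¬ ContainsDelta (fun i j => A' i j && A i j) := by
  rintro ⟨i1, i2, i3, j1, j2, j3, h12, h23, k12, k23, e1, e2, e3, e4, e5, e6⟩
  simp only [Bool.and_eq_true, Bool.and_eq_false_iff] at e1 e2 e3 e4 e5 e6
  -- A i2 j1 = false
  have hAi2j1 : A i2 j1 = false := by
    rcases e2 with h | h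
    · exact absurd ⟨i1, i2, j1, j2, h12, k12, e1.1, h, e3.1⟩ hA'
    · exact h
  have hAi3j2 : A i3 j2 = false := by
    rcases e5 with h | h
    · exact absurd ⟨i2, i3, j2, j3, h23, k23, e3.1, h, e6.1⟩ hA'
    · exact h
  exact hA2 ⟨i2, i3, j1, j2, h23, k12, hAi2j1, e3.2, e4.2, hAi3j2⟩
end

section
/- If a bipartite graph G can be written as the intersection of three chain graphs on the same vertex bipartition, then G admits orderings of its two vertex sides such that the resulting biadjacency matrix contains neither the pattern Γ = [[*,1,*],[1,0,1],[0,1,*]] nor the pattern Δ = [[1,*,*],[0,1,*],[1,0,1]]. -/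
/-- A bipartite graph (given by its biadjacency relation) is a chain graph:
neighborhoods of one side are totally ordered by inclusion. -/
def ChainGraph {m n : ℕ} (G : Fin m → Fin n → Bool) : Prop :=
  ∀ u u' : Fin m, (∀ v, G u v = true → G u' v = true) ∨ (∀ v, G u' v = true → G u v = true)

/-- Every chain graph is a "threshold" bipartite graph: there are weights
`a` on rows and `b` on columns with `E u v ↔ a u < b v`. -/
lemma chainGraph_rep {m n : ℕ} (E : Fin m → Fin n → Bool) (h : ChainGraph E) :
    ∃ (a : Fin m → ℕ) (b : Fin n → ℕ), ∀ u v, (E u v = true ↔ a u < b v) := by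
  classical
  set deg : Fin m → ℕ := fun u => (Finset.univ.filter (fun v => E u v = true)).card with hdeg
  have hdegle : ∀ u, deg u ≤ n := fun u =>
    le_trans (Finset.card_filter_le _ _) (by simp)
  set S : Fin n → Finset (Fin m) := fun v => Finset.univ.filter (fun u => E u v = true) with hS
  set t : Fin n → ℕ := fun v => if h : (S v).Nonempty then (S v).inf' h deg else n + 1 with ht
  have key : ∀ u v, E u v = true ↔ t v ≤ deg u := by
    intro u v
    constructor
    · intro he
      have hu : u ∈ S v := by simp [hS, he]
      have hne : (S v).Nonempty := ⟨u, hu⟩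
      simp only [ht, dif_pos hne]
      exact Finset.inf'_le _ hu
    · intro hle
      by_cases hne : (S v).Nonempty
      · obtain ⟨u0, hu0, hmin⟩ := Finset.exists_mem_eq_inf' hne deg
        have htv : t v = deg u0 := by simp only [ht, dif_pos hne]; exact hmin
        have hu0v : E u0 v = true := by simpa [hS] using hu0
        rcases h u0 u with hsub | hsub
        · exact hsub v hu0v
        · have hsubset : (Finset.univ.filter (fun w => E u w = true)) ⊆
              (Finset.univ.filter (fun w => E u0 w = true)) := by
            intro w hw
            simp only [Finset.mem_filter, Finset.mem_univ, true_and] at hw ⊢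
            exact hsub w hw
          have hcard : deg u ≤ deg u0 := Finset.card_le_card hsubset
          have hcard' : deg u0 ≤ deg u := by omega
          have heq := Finset.eq_of_subset_of_card_le hsubset hcard'
          have hv : v ∈ Finset.univ.filter (fun w => E u0 w = true) := by simp [hu0v]
          rw [← heq] at hv
          simpa using hv
      · exfalso
        have h1 : t v = n + 1 := by simp [ht, dif_neg hne]
        have := hdegle u
        omega
  have htle : ∀ v, t v ≤ n + 1 := by
    intro v
    by_cases hne : (S v).Nonempty
    · obtain ⟨u0, hu0, hmin⟩ := Finset.exists_mem_eq_inf' hne deg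
      have htv : t v = deg u0 := by simp only [ht, dif_pos hne]; exact hmin
      have := hdegle u0
      omega
    · simp [ht, dif_neg hne]
  refine ⟨fun u => n - deg u, fun v => n + 1 - t v, fun u v => ?_⟩
  rw [key u v]
  show t v ≤ deg u ↔ n - deg u < n + 1 - t v
  have h1 := hdegle u
  have h2 := htle v
  omega

theorem stmt_4 (m n : ℕ) (E E1 E2 E3 : Fin m → Fin n → Bool)
    (hE : ∀ u v, E u v = (E1 u v && E2 u v && E3 u v))
    (h1 : ChainGraph E1) (h2 : ChainGraph E2) (h3 : ChainGraph E3) :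
    ∃ (σ : Equiv.Perm (Fin m)) (τ : Equiv.Perm (Fin n)),
      ¬ ContainsGamma (fun i j => E (σ i) (τ j)) ∧
      ¬ ContainsDelta (fun i j => E (σ i) (τ j)) := by
  classical
  obtain ⟨a1, b1, r1⟩ := chainGraph_rep E1 h1
  obtain ⟨a2, b2, r2⟩ := chainGraph_rep E2 h2
  obtain ⟨a3, b3, r3⟩ := chainGraph_rep E3 h3
  set σ : Equiv.Perm (Fin m) := Tuple.sort (fun u => OrderDual.toDual (a1 u)) with hσdef
  set τ : Equiv.Perm (Fin n) := Tuple.sort (fun v => OrderDual.toDual (b2 v)) with hτdef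
  have hσ : ∀ {i i' : Fin m}, i ≤ i' → a1 (σ i') ≤ a1 (σ i) := by
    intro i i' hii
    exact Tuple.monotone_sort (fun u => OrderDual.toDual (a1 u)) hii
  have hτ : ∀ {j j' : Fin n}, j ≤ j' → b2 (τ j') ≤ b2 (τ j) := by
    intro j j' hjj
    exact Tuple.monotone_sort (fun v => OrderDual.toDual (b2 v)) hjj
  have etrue : ∀ u v, (E u v = true ↔ (a1 u < b1 v ∧ a2 u < b2 v ∧ a3 u < b3 v)) := by
    intro u v
    rw [hE u v, Bool.and_eq_true, Bool.and_eq_true, r1, r2, r3]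
    tauto
  have efalse : ∀ u v, E u v = false →
      ¬ (a1 u < b1 v ∧ a2 u < b2 v ∧ a3 u < b3 v) := by
    intro u v hf
    rw [← etrue u v]
    simp [hf]
  refine ⟨σ, τ, ?_, ?_⟩
  · rintro ⟨i1, i2, i3, j1, j2, j3, hi12, hi23, hj12, hj23, e12, e21, e22, e23, e31, e32⟩
    simp only at e12 e21 e22 e23 e31 e32
    have o12 := (etrue _ _).mp e12
    have o21 := (etrue _ _).mp e21
    have o23 := (etrue _ _).mp e23
    have o32 := (etrue _ _).mp e32
    have z22 := efalse _ _ e22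
    have z31 := efalse _ _ e31
    have hr1 := hσ hi12.le
    have hr2 := hσ hi23.le
    have hc1 := hτ hj12.le
    have hc2 := hτ hj23.le
    omega
  · rintro ⟨i1, i2, i3, j1, j2, j3, hi12, hi23, hj12, hj23, e11, e21, e22, e31, e32, e33⟩
    simp only at e11 e21 e22 e31 e32 e33
    have o11 := (etrue _ _).mp e11
    have o22 := (etrue _ _).mp e22
    have o31 := (etrue _ _).mp e31
    have o33 := (etrue _ _).mp e33
    have z21 := efalse _ _ e21
    have z32 := efalse _ _ e32
    have hr1 := hσ hi12.le
    have hr2 := hσ hi23.le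
    have hc1 := hτ hj12.le
    have hc2 := hτ hj23.le
    omega
end

section
/- Let A be an m×n 0/1 matrix, let A1 be the row-closure of A (A1[i,j] = 1 iff there exists j' ≥ j with A[i,j'] = 1), and let A2 be the column-closure of A (A2[i,j] = 1 iff there exists i' ≤ i with A[i',j] = 1). Let A12 = A1 ⊙ A2. Then: (a) A12 contains no 2×2 submatrix matching [[1,*],[0,1]]; (b) A ≤ A12 entrywise; and (c) for every entry (i,j) with A[i,j] = 0 and A12[i,j] = 1, there exist a column j' > j with A[i,j'] = 1 and a row i' < i with A[i',j] = 1. -/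
theorem stmt_6 (m n : ℕ) (A A1 A2 : Fin m → Fin n → Bool)
    (hA1 : ∀ i j, A1 i j = true ↔ ∃ j' : Fin n, j ≤ j' ∧ A i j' = true)
    (hA2 : ∀ i j, A2 i j = true ↔ ∃ i' : Fin m, i' ≤ i ∧ A i' j = true)
    (A12 : Fin m → Fin n → Bool)
    (hA12 : ∀ i j, A12 i j = (A1 i j && A2 i j)) :
    (¬ ∃ (i i' : Fin m) (j j' : Fin n), i < i' ∧ j < j' ∧
        A12 i j = true ∧ A12 i' j = false ∧ A12 i' j' = true) ∧
    (∀ i j, A i j ≤ A12 i j) ∧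
    (∀ i j, A i j = false → A12 i j = true →
      (∃ j' : Fin n, j < j' ∧ A i j' = true) ∧ (∃ i' : Fin m, i' < i ∧ A i' j = true)) := by
  refine ⟨?_, ?_, ?_⟩
  · rintro ⟨i, i', j, j', hii, hjj, h1, h0, h2⟩
    rw [hA12, Bool.and_eq_true, hA1, hA2] at h1 h2
    obtain ⟨-, i₀, hi₀, hAi₀⟩ := h1
    obtain ⟨⟨j₀, hj₀, hAj₀⟩, -⟩ := h2
    have : A12 i' j = true := by
      rw [hA12, Bool.and_eq_true, hA1, hA2]
      exact ⟨⟨j₀, le_trans hjj.le hj₀, hAj₀⟩, ⟨i₀, le_trans hi₀ hii.le, hAi₀⟩⟩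
    simp [this] at h0
  · intro i j
    cases hA : A i j with
    | false => simp
    | true =>
      have : A12 i j = true := by
        rw [hA12, Bool.and_eq_true, hA1, hA2]
        exact ⟨⟨j, le_refl _, hA⟩, ⟨i, le_refl _, hA⟩⟩
      simp [this]
  · intro i j h0 h1
    rw [hA12, Bool.and_eq_true, hA1, hA2] at h1
    obtain ⟨⟨j₀, hj₀, hAj₀⟩, ⟨i₀, hi₀, hAi₀⟩⟩ := h1
    refine ⟨⟨j₀, lt_of_le_of_ne hj₀ ?_, hAj₀⟩, ⟨i₀, lt_of_le_of_ne hi₀ ?_, hAi₀⟩⟩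
    · rintro rfl; rw [h0] at hAj₀; simp at hAj₀
    · rintro rfl; rw [h0] at hAi₀; simp at hAi₀
end

section
/- Let A be an m×n 0/1 matrix that avoids the 3×3 patterns Γ = [[*,1,*],[1,0,1],[0,1,*]] and Δ = [[1,*,*],[0,1,*],[1,0,1]]. Define a starred-zero entry (i,j) to be one with A[i,j] = 0 such that there exist j' > j with A[i,j'] = 1 and i' < i with A[i',j] = 1. Then there do not exist rows i1 < i2 and columns j1 < j2 such that (i1,j2) and (i2,j1) are both starred-zero entries while A[i1,j1] = A[i2,j2] = 1. -/
/-- (i,j) is a starred-zero entry of A. -/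
def StarredZero {m n : ℕ} (A : Fin m → Fin n → Bool) (i : Fin m) (j : Fin n) : Prop :=
  A i j = false ∧ (∃ j' : Fin n, j < j' ∧ A i j' = true) ∧
    (∃ i' : Fin m, i' < i ∧ A i' j = true)

theorem stmt_7 (m n : ℕ) (A : Fin m → Fin n → Bool)
    (hΓ : ¬ ContainsGamma A) (hΔ : ¬ ContainsDelta A) :
    ¬ ∃ (i1 i2 : Fin m) (j1 j2 : Fin n), i1 < i2 ∧ j1 < j2 ∧
      StarredZero A i1 j2 ∧ StarredZero A i2 j1 ∧
      A i1 j1 = true ∧ A i2 j2 = true := by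
  rintro ⟨i1, i2, j1, j2, hi, hj, ⟨h0, ⟨j', hj', hj'1⟩, ⟨i', hi', hi'1⟩⟩,
    ⟨h0', _, _⟩, h11, h22⟩
  exact hΓ ⟨i', i1, i2, j1, j2, j', hi', hi, hj, hj', hi'1, h11, h0, hj'1, h0', h22⟩
end

section
/- Let A be an m×n 0/1 matrix that avoids the 3×3 patterns Γ = [[*,1,*],[1,0,1],[0,1,*]] and Δ = [[1,*,*],[0,1,*],[1,0,1]]. Define a starred-zero entry (i,j) as one with A[i,j]=0 admitting a 1 somewhere to its right in row i and a 1 somewhere above it in column j. Then there do not exist rows i1 < i2 and columns j1 < j2 such that (i1,j1) and (i2,j2) are both starred-zero entries while A[i1,j2] = A[i2,j1] = 1. -/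
theorem stmt_8 (m n : ℕ) (A : Fin m → Fin n → Bool)
    (hΓ : ¬ ContainsGamma A) (hΔ : ¬ ContainsDelta A) :
    ¬ ∃ (i1 i2 : Fin m) (j1 j2 : Fin n), i1 < i2 ∧ j1 < j2 ∧
      StarredZero A i1 j1 ∧ StarredZero A i2 j2 ∧
      A i1 j2 = true ∧ A i2 j1 = true := by
  rintro ⟨i1, i2, j1, j2, h12, hj12, ⟨h10, _, i0, hi0, h0⟩, ⟨h20, ⟨j3, hj3, h3⟩, _⟩, ha, hb⟩
  exact hΔ ⟨i0, i1, i2, j1, j2, j3, hi0, h12, hj12, hj3, h0, h10, ha, hb, h20, h3⟩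
end

section
/- Let A be an m×n 0/1 matrix and A12 the Hadamard product of its row-closure and column-closure. Call (i,j) a starred zero if A[i,j]=0 and A12[i,j]=1, and a plain zero if A[i,j]=0 and A12[i,j]=0. Then there do not exist rows i1 < i2 and columns j1 < j2 such that (i1,j1) is a starred zero, (i2,j1) is a plain zero, and (i2,j2) is a starred zero. -/
theorem stmt_10 (m n : ℕ) (A A12 : Fin m → Fin n → Bool)
    (hA12 : ∀ i j, A12 i j = true ↔
      (∃ j' : Fin n, j ≤ j' ∧ A i j' = true) ∧ (∃ i' : Fin m, i' ≤ i ∧ A i' j = true)) :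
    ¬ ∃ (i1 i2 : Fin m) (j1 j2 : Fin n), i1 < i2 ∧ j1 < j2 ∧
      (A i1 j1 = false ∧ A12 i1 j1 = true) ∧
      (A i2 j1 = false ∧ A12 i2 j1 = false) ∧
      (A i2 j2 = false ∧ A12 i2 j2 = true) := by
  rintro ⟨i1, i2, j1, j2, hi, hj, ⟨-, h1⟩, ⟨-, h2⟩, ⟨-, h3⟩⟩
  rw [hA12] at h1 h3
  obtain ⟨-, i', hi', hAi'⟩ := h1
  obtain ⟨⟨j', hj', hAj'⟩, -⟩ := h3
  have : A12 i2 j1 = true := by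
    rw [hA12]
    exact ⟨⟨j', le_trans hj.le hj', hAj'⟩, ⟨i', le_trans hi' hi.le, hAi'⟩⟩
  simp [this] at h2
end

section
/- A 0/1 matrix A avoids the 2×2 pattern [[1,*],[0,1]] (no rows i<i', columns j<j' with A[i,j]=1, A[i',j]=0, A[i',j']=1) if and only if A equals the Hadamard product B ⊙ C where B avoids the 1×2 pattern (0 1) and C avoids the 2×1 pattern (1 over 0). -/
theorem stmt_14 (m n : ℕ) (A : Fin m → Fin n → Bool) :
    (¬ ∃ (i i' : Fin m) (j j' : Fin n), i < i' ∧ j < j' ∧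
      A i j = true ∧ A i' j = false ∧ A i' j' = true) ↔
    (∃ B C : Fin m → Fin n → Bool,
      (∀ i j, A i j = (B i j && C i j)) ∧
      (¬ ∃ (i : Fin m) (j j' : Fin n), j < j' ∧ B i j = false ∧ B i j' = true) ∧
      (¬ ∃ (i i' : Fin m) (j : Fin n), i < i' ∧ C i j = true ∧ C i' j = false)) := by
  constructor
  · intro hA
    refine ⟨fun i j => decide (∃ k : Fin n, j ≤ k ∧ A i k = true),
            fun i j => decide (∃ k : Fin m, k ≤ i ∧ A k j = true), ?_, ?_, ?_⟩
    · intro i j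
      by_cases h : A i j = true
      · simp only [h]
        rw [eq_comm, Bool.and_eq_true, decide_eq_true_iff, decide_eq_true_iff]
        exact ⟨⟨j, le_refl _, h⟩, ⟨i, le_refl _, h⟩⟩
      · rw [Bool.not_eq_true] at h
        rw [h, eq_comm, Bool.and_eq_false_iff]
        by_contra hc
        push_neg at hc
        obtain ⟨hb, hcc⟩ := hc
        rw [Bool.ne_false_iff] at hb hcc
        rw [decide_eq_true_iff] at hb hcc
        obtain ⟨k, hjk, hAk⟩ := hb
        obtain ⟨l, hli, hAl⟩ := hcc
        rcases lt_or_eq_of_le hjk with hjk | hjk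
        · rcases lt_or_eq_of_le hli with hli | hli
          · exact hA ⟨l, i, j, k, hli, hjk, hAl, h, hAk⟩
          · exact absurd hAl (by rw [hli, h]; simp)
        · exact absurd hAk (by rw [← hjk, h]; simp)
    · rintro ⟨i, j, j', hjj, hb, hb'⟩
      rw [decide_eq_true_iff] at hb'
      obtain ⟨k, hk, hAk⟩ := hb'
      rw [decide_eq_false_iff_not] at hb
      exact hb ⟨k, le_of_lt (lt_of_lt_of_le hjj hk), hAk⟩
    · rintro ⟨i, i', j, hii, hc, hc'⟩
      rw [decide_eq_true_iff] at hc
      obtain ⟨k, hk, hAk⟩ := hc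
      rw [decide_eq_false_iff_not] at hc'
      exact hc' ⟨k, le_trans hk (le_of_lt hii), hAk⟩
  · rintro ⟨B, C, hABC, hB, hC⟩ ⟨i, i', j, j', hii, hjj, h1, h2, h3⟩
    rw [hABC, Bool.and_eq_false_iff] at h2
    rw [hABC, Bool.and_eq_true] at h1 h3
    rcases h2 with h2 | h2
    · exact hB ⟨i', j, j', hjj, h2, h3.1⟩
    · exact hC ⟨i, i', j, hii, h1.2, h2⟩
end

section
/- Let G1 and G2 be chain graphs on the same bipartition U ∪ V. Then there exist orderings of U and V such that the biadjacency matrix of G1 ∩ G2 under these orderings avoids the 2×2 pattern [[1,*],[0,1]]. -/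
lemma chain_card_subset {α : Type*} [Fintype α] [DecidableEq α] (S T : α → Bool)
    (h : (∀ x, S x = true → T x = true) ∨ (∀ x, T x = true → S x = true))
    (hc : (Finset.univ.filter fun x => S x = true).card ≤
          (Finset.univ.filter fun x => T x = true).card) :
    ∀ x, S x = true → T x = true := by
  rcases h with h | h
  · exact h
  · have hsub : (Finset.univ.filter fun x => T x = true) ⊆
        (Finset.univ.filter fun x => S x = true) := by
      intro x hx
      simp only [Finset.mem_filter, Finset.mem_univ, true_and] at hx ⊢
      exact h x hx
    have := Finset.eq_of_subset_of_card_le hsub hc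
    intro x hx
    have : x ∈ (Finset.univ.filter fun x => T x = true) := by
      rw [this]; simp [hx]
    simpa using this

theorem stmt_16 (m n : ℕ) (E1 E2 : Fin m → Fin n → Bool)
    (h1 : ChainGraph E1) (h2 : ChainGraph E2) :
    ∃ (σ : Equiv.Perm (Fin m)) (τ : Equiv.Perm (Fin n)),
      ¬ ∃ (i i' : Fin m) (j j' : Fin n), i < i' ∧ j < j' ∧
        (E1 (σ i) (τ j) && E2 (σ i) (τ j)) = true ∧
        (E1 (σ i') (τ j) && E2 (σ i') (τ j)) = false ∧
        (E1 (σ i') (τ j') && E2 (σ i') (τ j')) = true := by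
  classical
  -- columns of E2 form a chain
  have hcol : ∀ j j' : Fin n, (∀ u, E2 u j = true → E2 u j' = true) ∨
      (∀ u, E2 u j' = true → E2 u j = true) := by
    intro j j'
    by_contra hcon
    push_neg at hcon
    obtain ⟨⟨u, hu1, hu2⟩, ⟨u', hv1, hv2⟩⟩ := hcon
    rcases h2 u u' with h | h
    · exact hv2 (h j hu1)
    · exact hu2 (h j' hv1)
  set f1 : Fin m → ℕ := fun u => (Finset.univ.filter fun v => E1 u v = true).card with hf1
  set f2 : Fin n → ℕᵒᵈ :=
    fun j => OrderDual.toDual (Finset.univ.filter fun u => E2 u j = true).card with hf2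
  refine ⟨Tuple.sort f1, Tuple.sort f2, ?_⟩
  rintro ⟨i, i', j, j', hii, hjj, hA, hB, hC⟩
  simp only [Bool.and_eq_true] at hA hC
  have hmono1 : f1 (Tuple.sort f1 i) ≤ f1 (Tuple.sort f1 i') :=
    Tuple.monotone_sort f1 hii.le
  have hmono2 : f2 (Tuple.sort f2 j) ≤ f2 (Tuple.sort f2 j') :=
    Tuple.monotone_sort f2 hjj.le
  -- row subset: N1(σ i) ⊆ N1(σ i')
  have hrow : ∀ v, E1 (Tuple.sort f1 i) v = true → E1 (Tuple.sort f1 i') v = true :=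
    chain_card_subset _ _ (h1 _ _) hmono1
  -- column subset: N2col(τ j') ⊆ N2col(τ j)
  have hcolsub : ∀ u, E2 u (Tuple.sort f2 j') = true → E2 u (Tuple.sort f2 j) = true :=
    chain_card_subset _ _ (hcol _ _) hmono2
  have e1 : E1 (Tuple.sort f1 i') (Tuple.sort f2 j) = true := hrow _ hA.1
  have e2 : E2 (Tuple.sort f1 i') (Tuple.sort f2 j) = true := hcolsub _ hC.2
  rw [e1, e2] at hB
  simp at hB
end
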